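/- Under the assumptions of the approximation bound, if α := ρ(ρ'+1) < 1 and x_0 = x̃_0, then for every horizon T, ‖x_T − x̃_T‖ ≤ (1 − α^T)/(1 − α) · √M · ρ ≤ √M/(1−α) · ρ. -/

import Mathlib

/-!
Comparing one step of both dynamics through the Lipschitz bounds on `f` and `π`, the deviation
`e_t = ‖x_t - x̃_t‖` satisfies `e_{t+1} ≤ α e_t + ρ 𝔼‖a - π(x̃_t)‖`, and `𝔼‖a - π(x̃_t)‖ ≤ √M` since the
square of a mean is at most the mean of the square. Unrolling this affine recursion from `e_0 = 0`
bounds `e_T` by `ρ √M (1 + α + ⋯ + α^(T-1))`.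
-/

open MeasureTheory ProbabilityTheory Finset

theorem integral_le_sqrt_integral_sq {Ω : Type*} [MeasurableSpace Ω] {μ : Measure Ω}
    [IsProbabilityMeasure μ] {g : Ω → ℝ} (hg : MemLp g 2 μ) :
    ∫ ω, g ω ∂μ ≤ √(∫ ω, g ω ^ 2 ∂μ) := by
  refine Real.le_sqrt_of_sq_le ?_
  have hvar := variance_eq_sub hg ▸ variance_nonneg g μ
  simpa only [Pi.pow_apply, sub_nonneg] using hvar

theorem le_mul_geom_sum_of_le_mul_add {α c : ℝ} {e : ℕ → ℝ} (hα : 0 ≤ α) (h0 : e 0 ≤ 0)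
    (hstep : ∀ t, e (t + 1) ≤ α * e t + c) (T : ℕ) :
    e T ≤ c * ∑ i ∈ range T, α ^ i := by
  induction T with
  | zero => simpa using h0
  | succ T ih =>
    calc e (T + 1) ≤ α * e T + c := hstep T
      _ ≤ α * (c * ∑ i ∈ range T, α ^ i) + c := by gcongr
      _ = c * ∑ i ∈ range (T + 1), α ^ i := by rw [geom_sum_succ]; ring

section
variable {E A : Type*} [NormedAddCommGroup E] [NormedSpace ℝ E] [CompleteSpace E]
  [MeasurableSpace A] {μ : Measure A} [IsProbabilityMeasure μ]

theorem norm_sub_integral_le_integral_norm_sub (p : E) {g : A → E} (hg : Integrable g μ) :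
    ‖p - ∫ a, g a ∂μ‖ ≤ ∫ a, ‖p - g a‖ ∂μ := by
  calc ‖p - ∫ a, g a ∂μ‖ = ‖∫ a, (p - g a) ∂μ‖ := by
        rw [integral_sub (integrable_const p) hg, integral_const, probReal_univ, one_smul]
    _ ≤ ∫ a, ‖p - g a‖ ∂μ := norm_integral_le_integral_norm _

variable [NormedAddCommGroup A]

theorem norm_sub_integral_le_of_lipschitz {f : E → A → E} {π : E → A} {ρ ρ' : ℝ} (hρ : 0 ≤ ρ)
    (hf : ∀ x y a b, ‖f x a - f y b‖ ≤ ρ * (‖x - y‖ + ‖a - b‖))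
    (hπ : ∀ x y, ‖π x - π y‖ ≤ ρ' * ‖x - y‖) (x y : E)
    (hfy : Integrable (f y) μ) (hπy : Integrable (fun a => ‖a - π y‖) μ) :
    ‖f x (π x) - ∫ a, f y a ∂μ‖ ≤ ρ * (ρ' + 1) * ‖x - y‖ + ρ * ∫ a, ‖a - π y‖ ∂μ := by
  have hpoint : ∀ a, ‖f x (π x) - f y a‖ ≤ ρ * (ρ' + 1) * ‖x - y‖ + ρ * ‖a - π y‖ := fun a =>
    calc ‖f x (π x) - f y a‖ ≤ ρ * (‖x - y‖ + ‖π x - a‖) := hf _ _ _ _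
      _ ≤ ρ * (‖x - y‖ + (‖π x - π y‖ + ‖a - π y‖)) := by
          gcongr; rw [norm_sub_rev a]; exact norm_sub_le_norm_sub_add_norm_sub _ _ _
      _ ≤ ρ * (‖x - y‖ + (ρ' * ‖x - y‖ + ‖a - π y‖)) := by gcongr; exact hπ x y
      _ = ρ * (ρ' + 1) * ‖x - y‖ + ρ * ‖a - π y‖ := by ring
  calc ‖f x (π x) - ∫ a, f y a ∂μ‖ ≤ ∫ a, ‖f x (π x) - f y a‖ ∂μ :=
        norm_sub_integral_le_integral_norm_sub _ hfy
    _ ≤ ∫ a, (ρ * (ρ' + 1) * ‖x - y‖ + ρ * ‖a - π y‖) ∂μ :=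
        integral_mono ((integrable_const _).sub hfy).norm
          ((integrable_const _).add (hπy.const_mul ρ)) hpoint
    _ = ρ * (ρ' + 1) * ‖x - y‖ + ρ * ∫ a, ‖a - π y‖ ∂μ := by
        rw [integral_add (integrable_const _) (hπy.const_mul ρ), integral_const, integral_const_mul,
          probReal_univ, one_smul]
end

theorem trajectory_deviation_bound_general
    {n d : ℕ} [MeasurableSpace (EuclideanSpace ℝ (Fin d))] [BorelSpace (EuclideanSpace ℝ (Fin d))]
    (f : EuclideanSpace ℝ (Fin n) → EuclideanSpace ℝ (Fin d) → EuclideanSpace ℝ (Fin n))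
    (π : EuclideanSpace ℝ (Fin n) → EuclideanSpace ℝ (Fin d))
    (μ : EuclideanSpace ℝ (Fin n) → Measure (EuclideanSpace ℝ (Fin d)))
    [∀ x, IsProbabilityMeasure (μ x)]
    (ρ ρ' M : ℝ) (hρ : 0 ≤ ρ) (hρ' : 0 ≤ ρ')
    (hα : ρ * (ρ' + 1) < 1)
    (hf : ∀ x y a b, ‖f x a - f y b‖ ≤ ρ * (‖x - y‖ + ‖a - b‖))
    (hπ : ∀ x y, ‖π x - π y‖ ≤ ρ' * ‖x - y‖)
    (hvar : ∀ x, ∫ a, ‖a - π x‖ ^ 2 ∂(μ x) ≤ M)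
    (hint : ∀ x, Integrable (fun a => f x a) (μ x))
    (hint_sq : ∀ x, Integrable (fun a => ‖a - π x‖ ^ 2) (μ x))
    (x xtil : ℕ → EuclideanSpace ℝ (Fin n))
    (h0 : x 0 = xtil 0)
    (hx : ∀ t, x (t + 1) = f (x t) (π (x t)))
    (hxtil : ∀ t, xtil (t + 1) = ∫ a, f (xtil t) a ∂(μ (xtil t))) :
    ∀ T : ℕ,
      ‖x T - xtil T‖ ≤ (1 - (ρ * (ρ' + 1)) ^ T) / (1 - ρ * (ρ' + 1)) * Real.sqrt M * ρ ∧
      (1 - (ρ * (ρ' + 1)) ^ T) / (1 - ρ * (ρ' + 1)) * Real.sqrt M * ρ ≤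
        Real.sqrt M / (1 - ρ * (ρ' + 1)) * ρ := by
  intro T
  set α := ρ * (ρ' + 1)
  have hα0 : 0 ≤ α := by positivity
  have hdev_memLp : ∀ y, MemLp (fun a => ‖a - π y‖) 2 (μ y) := fun y =>
    (memLp_two_iff_integrable_sq (continuous_id.sub continuous_const).norm.aestronglyMeasurable).2
      (hint_sq y)
  have hdev_le : ∀ y, ∫ a, ‖a - π y‖ ∂(μ y) ≤ √M := fun y =>
    (integral_le_sqrt_integral_sq (hdev_memLp y)).trans (Real.sqrt_le_sqrt (hvar y))
  have hstep : ∀ t, ‖x (t + 1) - xtil (t + 1)‖ ≤ α * ‖x t - xtil t‖ + √M * ρ := fun t => by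
    rw [hx, hxtil]
    refine (norm_sub_integral_le_of_lipschitz hρ hf hπ _ _ (hint _)
      ((hdev_memLp _).integrable one_le_two)).trans ?_
    rw [mul_comm √M]
    gcongr
    exact hdev_le _
  have hdev := le_mul_geom_sum_of_le_mul_add (e := fun t => ‖x t - xtil t‖) hα0
    (by simp [h0]) hstep T
  have hgeom : ∑ i ∈ range T, α ^ i = (1 - α ^ T) / (1 - α) := by
    rw [geom_sum_eq hα.ne, ← neg_div_neg_eq, neg_sub, neg_sub]
  rw [← hgeom]
  refine ⟨by linarith, ?_⟩
  calc (∑ i ∈ range T, α ^ i) * √M * ρ ≤ 1 / (1 - α) * √M * ρ := by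
        gcongr; simpa using geom_sum_Ico_le_of_lt_one (m := 0) (n := T) hα0 hα
    _ = √M / (1 - α) * ρ := by ring

/-- Trajectory deviation bound: under α = ρ(ρ'+1) < 1, for every horizon T,
‖x_T − x̃_T‖ ≤ (1 − α^T)/(1 − α) · √M · ρ ≤ √M/(1−α) · ρ. -/
theorem trajectory_deviation_bound
    {n d : ℕ} [MeasurableSpace (EuclideanSpace ℝ (Fin d))] [BorelSpace (EuclideanSpace ℝ (Fin d))]
    (f : EuclideanSpace ℝ (Fin n) → EuclideanSpace ℝ (Fin d) → EuclideanSpace ℝ (Fin n))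
    (π : EuclideanSpace ℝ (Fin n) → EuclideanSpace ℝ (Fin d))
    (μ : EuclideanSpace ℝ (Fin n) → Measure (EuclideanSpace ℝ (Fin d)))
    [∀ x, IsProbabilityMeasure (μ x)]
    (ρ ρ' M : ℝ) (hρ : 0 ≤ ρ) (hρ' : 0 ≤ ρ') (hM : 0 ≤ M)
    (hα : ρ * (ρ' + 1) < 1)
    (hf : ∀ x y a b, ‖f x a - f y b‖ ≤ ρ * (‖x - y‖ + ‖a - b‖))
    (hπ : ∀ x y, ‖π x - π y‖ ≤ ρ' * ‖x - y‖)
    (hmean : ∀ x, ∫ a, a ∂(μ x) = π x)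
    (hvar : ∀ x, ∫ a, ‖a - π x‖ ^ 2 ∂(μ x) ≤ M)
    (hint : ∀ x, Integrable (fun a => f x a) (μ x))
    (hint_id : ∀ x, Integrable (fun a : EuclideanSpace ℝ (Fin d) => a) (μ x))
    (hint_sq : ∀ x, Integrable (fun a => ‖a - π x‖ ^ 2) (μ x))
    (x xtil : ℕ → EuclideanSpace ℝ (Fin n))
    (h0 : x 0 = xtil 0)
    (hx : ∀ t, x (t + 1) = f (x t) (π (x t)))
    (hxtil : ∀ t, xtil (t + 1) = ∫ a, f (xtil t) a ∂(μ (xtil t))) :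
    ∀ T : ℕ,
      ‖x T - xtil T‖ ≤ (1 - (ρ * (ρ' + 1)) ^ T) / (1 - ρ * (ρ' + 1)) * Real.sqrt M * ρ ∧
      (1 - (ρ * (ρ' + 1)) ^ T) / (1 - ρ * (ρ' + 1)) * Real.sqrt M * ρ ≤
        Real.sqrt M / (1 - ρ * (ρ' + 1)) * ρ :=
  trajectory_deviation_bound_general f π μ ρ ρ' M hρ hρ' hα hf hπ hvar hint hint_sq x xtil h0 hx
    hxtil
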